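/- Let p_j, p_k, e : ℝ → ℝ² have derivatives at time t, with p_j(t) ≠ p_k(t) and e(t) = p_j(t) + λ·(p_k(t) − p_j(t)) for some λ ∈ (0,1). Suppose p_j'(t) = R_{φ_j}( (e(t) − p_j(t))/‖e(t) − p_j(t)‖ ) and p_k'(t) = R_{φ_k}^T( (e(t) − p_k(t))/‖e(t) − p_k(t)‖ ) for φ_j, φ_k ∈ ℝ, and e'(t) is arbitrary. Then d/dt ‖p_j(t) − e(t)‖ + d/dt ‖p_k(t) − e(t)‖ = −cos φ_j − cos φ_k; in particular the sum is independent of the evader's velocity. -/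

import Mathlib

open Real

noncomputable section

/-- The vector `(a, b)` in the Euclidean plane. -/
def vec2 (a b : ℝ) : EuclideanSpace ℝ (Fin 2) := (WithLp.equiv 2 (Fin 2 → ℝ)).symm ![a, b]

/-- Signed area `A(a,b,c) = ½·[a₁(b₂−c₂) + b₁(c₂−a₂) + c₁(a₂−b₂)]`. -/
def sarea (a b c : EuclideanSpace ℝ (Fin 2)) : ℝ :=
  (1/2) * (a 0 * (b 1 - c 1) + b 0 * (c 1 - a 1) + c 0 * (a 1 - b 1))

/-- `v^⊥ = (−v₂, v₁)`. -/
def perp (v : EuclideanSpace ℝ (Fin 2)) : EuclideanSpace ℝ (Fin 2) := vec2 (-(v 1)) (v 0)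

/-- Planar dot product. -/
def dot2 (u v : EuclideanSpace ℝ (Fin 2)) : ℝ := u 0 * v 0 + u 1 * v 1

/-- Clockwise rotation by `φ`: `R_φ(a,b) = (a cos φ + b sin φ, −a sin φ + b cos φ)`. -/
def rotCW (φ : ℝ) (v : EuclideanSpace ℝ (Fin 2)) : EuclideanSpace ℝ (Fin 2) :=
  vec2 (v 0 * Real.cos φ + v 1 * Real.sin φ) (-(v 0) * Real.sin φ + v 1 * Real.cos φ)

/-- Counterclockwise rotation by `φ` (the transpose `R_φ^T`). -/
def rotCCW (φ : ℝ) (v : EuclideanSpace ℝ (Fin 2)) : EuclideanSpace ℝ (Fin 2) :=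
  vec2 (v 0 * Real.cos φ - v 1 * Real.sin φ) (v 0 * Real.sin φ + v 1 * Real.cos φ)

/-!
The rate of change of `‖p - e‖` is the component of `p' - e'` along the unit vector
`(p - e)/‖p - e‖`. Since `e` lies strictly between `p_j` and `p_k`, the unit vectors from
`p_j` and from `p_k` toward `e` are `n` and `-n` for `n = (p_k - p_j)/‖p_k - p_j‖`, so the
evader contributes `⟪n, e'⟫` to one rate and `-⟪n, e'⟫` to the other, and these cancel. What
remains is `-⟪n, R_φ n⟫ = -cos φ` for each pursuer.
-/

open scoped RealInnerProductSpace

theorem HasDerivAt.norm {F : Type*} [NormedAddCommGroup F] [InnerProductSpace ℝ F]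
    {f : ℝ → F} {f' : F} {t : ℝ} (hf : HasDerivAt f f' t) (h0 : f t ≠ 0) :
    HasDerivAt (fun s => ‖f s‖) ⟪NormedSpace.normalize (f t), f'⟫ t := by
  have hpos : 0 < ‖f t‖ := norm_pos_iff.2 h0
  have h := (Real.hasDerivAt_sqrt (pow_pos hpos 2).ne').comp t hf.norm_sq
  simp only [Function.comp_def, Real.sqrt_sq (norm_nonneg _)] at h
  refine h.congr_deriv ?_
  rw [NormedSpace.normalize, real_inner_smul_left]
  field_simp

lemma vec2_apply_zero (a b : ℝ) : vec2 a b 0 = a := rfl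
lemma vec2_apply_one (a b : ℝ) : vec2 a b 1 = b := rfl

lemma inner_rotCW_self (φ : ℝ) (v : EuclideanSpace ℝ (Fin 2)) :
    ⟪v, rotCW φ v⟫ = ‖v‖ ^ 2 * cos φ := by
  simp only [← real_inner_self_eq_norm_sq, PiLp.inner_apply, Fin.sum_univ_two, RCLike.inner_apply,
    conj_trivial, rotCW, vec2_apply_zero, vec2_apply_one]
  ring

lemma inner_rotCCW_self (φ : ℝ) (v : EuclideanSpace ℝ (Fin 2)) :
    ⟪v, rotCCW φ v⟫ = ‖v‖ ^ 2 * cos φ := by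
  simp only [← real_inner_self_eq_norm_sq, PiLp.inner_apply, Fin.sum_univ_two, RCLike.inner_apply,
    conj_trivial, rotCCW, vec2_apply_zero, vec2_apply_one]
  ring

lemma rotCCW_neg (φ : ℝ) (v : EuclideanSpace ℝ (Fin 2)) : rotCCW φ (-v) = -rotCCW φ v := by
  ext i; fin_cases i <;> simp [rotCCW, vec2_apply_zero, vec2_apply_one] <;> ring

open NormedSpace in
lemma normalize_sub_of_eq_add_smul_sub {V : Type*} [NormedAddCommGroup V] [NormedSpace ℝ V]
    {a b x : V} {lam : ℝ} (hlam : lam ∈ Set.Ioo (0 : ℝ) 1) (hx : x = a + lam • (b - a)) :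
    normalize (x - a) = normalize (b - a) ∧ normalize (x - b) = -normalize (b - a) := by
  obtain ⟨hl0, hl1⟩ := hlam
  have hxa : x - a = lam • (b - a) := by rw [hx]; module
  have hxb : x - b = (lam - 1) • (b - a) := by rw [hx]; module
  rw [hxa, hxb, normalize_smul_of_pos hl0, normalize_smul_of_neg (by linarith)]
  exact ⟨rfl, rfl⟩

open NormedSpace in
/-- Edge-phase distance rate: when `e` lies strictly between the active pursuers `p_j, p_k`
and each active pursuer moves at unit speed along the unit vector toward the evader rotated
by its control angle, then `d/dt ‖p_j − e‖ + d/dt ‖p_k − e‖ = −cos φ_j − cos φ_k`,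
independently of the evader's velocity `e'`. -/
theorem stmt_8 (pj pk e : ℝ → EuclideanSpace ℝ (Fin 2)) (t φj φk lam : ℝ)
    (hne : pj t ≠ pk t) (hlam : lam ∈ Set.Ioo (0:ℝ) 1)
    (he : e t = pj t + lam • (pk t - pj t))
    (e' : EuclideanSpace ℝ (Fin 2))
    (hpj : HasDerivAt pj (rotCW φj (‖e t - pj t‖⁻¹ • (e t - pj t))) t)
    (hpk : HasDerivAt pk (rotCCW φk (‖e t - pk t‖⁻¹ • (e t - pk t))) t)
    (heD : HasDerivAt e e' t) :
    ∃ Dj Dk : ℝ, HasDerivAt (fun s => ‖pj s - e s‖) Dj t ∧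
      HasDerivAt (fun s => ‖pk s - e s‖) Dk t ∧
      Dj + Dk = -Real.cos φj - Real.cos φk := by
  set n := normalize (pk t - pj t)
  have hn : ‖n‖ = 1 := norm_normalize (sub_ne_zero.2 hne.symm)
  obtain ⟨hnj, hnk⟩ := normalize_sub_of_eq_add_smul_sub hlam he
  have hnj' : normalize (pj t - e t) = -n := by rw [← neg_sub, normalize_neg, hnj]
  have hnk' : normalize (pk t - e t) = n := by rw [← neg_sub, normalize_neg, hnk, neg_neg]
  have hn0 : n ≠ 0 := norm_ne_zero_iff.1 (hn ▸ one_ne_zero)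
  have hj0 : pj t - e t ≠ 0 := (normalize_eq_zero_iff _).not.1 (hnj' ▸ neg_ne_zero.2 hn0)
  have hk0 : pk t - e t ≠ 0 := (normalize_eq_zero_iff _).not.1 (hnk' ▸ hn0)
  refine ⟨_, _, (hpj.sub heD).norm hj0, (hpk.sub heD).norm hk0, ?_⟩
  change ⟪normalize (pj t - e t), rotCW φj (normalize (e t - pj t)) - e'⟫
    + ⟪normalize (pk t - e t), rotCCW φk (normalize (e t - pk t)) - e'⟫ = _
  rw [hnj', hnk', hnj, hnk, rotCCW_neg, inner_neg_left, inner_sub_right, inner_sub_right,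
    inner_neg_right, inner_rotCW_self, inner_rotCCW_self, hn]
  ring

end
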